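/- Let G = {1, σ} be a group of order 2 and A a G-module that is a finitely generated abelian group. Then #H¹(G, A) = 2^{r(A) - 2r₊(A)} · (A^G : NA), where NA = {a + σa : a ∈ A}, r(A) = rank(A), and r₊(A) = rank(A^G). -/

import Mathlib

variable (G : Type*) [Group G] [Fintype G] (A : Type*) [AddCommGroup A] [DistribMulAction G A]

/-- The norm map `a ↦ ∑_{τ ∈ G} τ • a`. -/
noncomputable def normMap : A →+ A := ∑ τ : G, DistribMulAction.toAddMonoidHom A τ

/-- The map `a ↦ a - σ • a`. -/
def oneSubMap (σ : G) : A →+ A := AddMonoidHom.id A - DistribMulAction.toAddMonoidHom A σ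

/-- The subgroup of `G`-fixed points `A^G`. -/
def fixedSub : AddSubgroup A where
  carrier := {a | ∀ τ : G, τ • a = a}
  zero_mem' := fun τ => smul_zero τ
  add_mem' := fun ha hb τ => by rw [smul_add, ha τ, hb τ]
  neg_mem' := fun ha τ => by rw [smul_neg, ha τ]

/-- `#H¹(G,A)` for `G` cyclic with generator `σ`, computed as `#(ker N_G / (1-σ)A)`. -/
noncomputable def H1card (σ : G) : ℕ :=
  Nat.card ((normMap G A).ker ⧸ ((oneSubMap G A σ).range.addSubgroupOf (normMap G A).ker))

/-- `#Ĥ⁰(G,A) = (A^G : N_G A)`. -/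
noncomputable def H0card : ℕ :=
  Nat.card (fixedSub G A ⧸ ((normMap G A).range.addSubgroupOf (fixedSub G A)))

/-- The Herbrand quotient `h(G,A) = #Ĥ⁰(G,A) / #H¹(G,A)`. -/
noncomputable def herbrand (σ : G) : ℚ := (H0card G A : ℚ) / (H1card G A σ : ℚ)

/-!
Write `N = 1 + σ` and `D = 1 - σ`, so that `H¹ = ker N / D A` and `Ĥ⁰ = ker D / N A`. On `ker N`
the map `D` is multiplication by `2`, and on `ker D` so is `N`. Hence `2 ker N ≤ D A ≤ ker N`,
and the index `(D A : 2 ker N) = (A : ker N + ker D)`, while for a finitely generated abelian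
group `K` one has `(K : 2K) = 2 ^ rank K · #K[2]`. This gives
`(A : ker N + ker D) · #H¹ = 2 ^ rank (ker N) · #(ker N)[2]` and symmetrically
`(A : ker N + ker D) · #Ĥ⁰ = 2 ^ rank (ker D) · #(ker D)[2]`. The `2`-torsion of `ker N` and
`ker D` coincide (on it `σ a = -a` iff `σ a = a`), and `rank (ker N) + rank (ker D) = rank A`
because `N A` has finite index in `ker D`.
-/

open Module

theorem Module.finrank_quotient_torsion {R M : Type*} [CommRing R] [IsDomain R] [AddCommGroup M]
    [Module R M] [Module.Finite R M] : finrank R (M ⧸ Submodule.torsion R M) = finrank R M := by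
  rw [← (Submodule.torsion R M).finrank_quotient_add_finrank,
    Submodule.torsion_isTorsion.finrank_eq_zero, add_zero]

theorem AddMonoidHom.finrank_range_add_finrank_ker {B C : Type*} [AddCommGroup B]
    [AddCommGroup C] [Module.Finite ℤ B] (f : B →+ C) :
    finrank ℤ f.range + finrank ℤ f.ker = finrank ℤ B := by
  rw [← (LinearMap.ker f.toIntLinearMap).finrank_quotient_add_finrank,
    f.toIntLinearMap.quotKerEquivRange.finrank_eq]
  rfl

namespace AddSubgroup

variable {B C : Type*} [AddCommGroup B] [AddCommGroup C]

instance instModuleFiniteInt [Module.Finite ℤ B] (K : AddSubgroup B) : Module.Finite ℤ K :=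
  inferInstanceAs (Module.Finite ℤ K.toIntSubmodule)

theorem finrank_eq_of_relIndex_ne_zero [Module.Finite ℤ B] {H K : AddSubgroup B} (hHK : H ≤ K)
    (h : H.relIndex K ≠ 0) : finrank ℤ H = finrank ℤ K := by
  set Q := (H.addSubgroupOf K).toIntSubmodule
  have : Finite (K ⧸ Q) := (Nat.card_ne_zero.mp h).2
  have hQ : finrank ℤ (K ⧸ Q) = 0 :=
    (isAddTorsion_iff_isTorsion_int.mp isAddTorsion_of_finite).finrank_eq_zero
  rw [← Q.finrank_quotient_add_finrank, hQ, zero_add]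
  exact (addSubgroupOfEquivOfLe hHK).symm.toIntLinearEquiv.finrank_eq

theorem ker_nsmul_le_torsion {n : ℕ} (hn : n ≠ 0) :
    (nsmulAddMonoidHom (α := B) n).ker ≤ (Submodule.torsion ℤ B).toAddSubgroup := by
  intro b hb
  rw [Submodule.mem_toAddSubgroup, Submodule.mem_torsion_iff]
  exact ⟨⟨n, mem_nonZeroDivisors_of_ne_zero (by exact_mod_cast hn)⟩, by simpa using hb⟩

theorem ker_nsmul_eq_addSubgroupOf (K : AddSubgroup B) (n : ℕ) :
    (nsmulAddMonoidHom (α := K) n).ker = (nsmulAddMonoidHom (α := B) n).ker.addSubgroupOf K := by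
  ext x
  simp [mem_addSubgroupOf, Subtype.ext_iff]

theorem map_range_nsmul_of_surjective {f : B →+ C} (hf : Function.Surjective f) (n : ℕ) :
    (nsmulAddMonoidHom (α := B) n).range.map f = (nsmulAddMonoidHom (α := C) n).range := by
  ext c
  simp only [mem_map, AddMonoidHom.mem_range, nsmulAddMonoidHom_apply]
  constructor
  · rintro ⟨_, ⟨b, rfl⟩, rfl⟩
    exact ⟨f b, (map_nsmul f n b).symm⟩
  · rintro ⟨c, rfl⟩
    obtain ⟨b, rfl⟩ := hf c
    exact ⟨n • b, ⟨b, rfl⟩, map_nsmul f n b⟩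

theorem index_range_nsmul_sup_torsion [Module.Finite ℤ B] (n : ℕ) :
    ((nsmulAddMonoidHom (α := B) n).range ⊔ (Submodule.torsion ℤ B).toAddSubgroup).index =
      n ^ finrank ℤ B := by
  set π := (Submodule.torsion ℤ B).mkQ.toAddMonoidHom
  have hπ : Function.Surjective π := Submodule.mkQ_surjective _
  have hker : π.ker = (Submodule.torsion ℤ B).toAddSubgroup := by
    ext b
    exact Submodule.Quotient.mk_eq_zero _
  have := index_map (nsmulAddMonoidHom (α := B) n).range π
  rw [hker, AddMonoidHom.range_eq_top.mpr hπ, index_top, mul_one,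
    map_range_nsmul_of_surjective hπ, index_range_nsmul, finrank_quotient_torsion] at this
  exact this.symm

theorem relIndex_range_nsmul_torsion [Module.Finite ℤ B] {n : ℕ} (hn : n ≠ 0) :
    (nsmulAddMonoidHom (α := B) n).range.relIndex (Submodule.torsion ℤ B).toAddSubgroup =
      Nat.card (nsmulAddMonoidHom (α := B) n).ker := by
  set T := (Submodule.torsion ℤ B).toAddSubgroup
  have : Finite T :=
    Module.finite_of_fg_torsion (Submodule.torsion ℤ B) Submodule.torsion_isTorsion
  have hT : (nsmulAddMonoidHom (α := B) n).range.addSubgroupOf T =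
      (nsmulAddMonoidHom (α := T) n).range := by
    ext ⟨x, hx⟩
    simp only [mem_addSubgroupOf, AddMonoidHom.mem_range, nsmulAddMonoidHom_apply]
    constructor
    · rintro ⟨b, rfl⟩
      obtain ⟨a, ha⟩ := (Submodule.mem_torsion_iff _).mp hx
      refine ⟨⟨b, (Submodule.mem_torsion_iff _).mpr
        ⟨a * ⟨n, mem_nonZeroDivisors_of_ne_zero (by exact_mod_cast hn)⟩, ?_⟩⟩, rfl⟩
      rw [mul_smul]
      simpa using ha
    · rintro ⟨t, ht⟩
      exact ⟨t, congrArg Subtype.val ht⟩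
  rw [relIndex, hT, index_range, ker_nsmul_eq_addSubgroupOf]
  exact Nat.card_congr (addSubgroupOfEquivOfLe (ker_nsmul_le_torsion hn)).toEquiv

theorem index_range_nsmul_eq_pow_finrank_mul_card_ker [Module.Finite ℤ B] {n : ℕ} (hn : n ≠ 0) :
    (nsmulAddMonoidHom (α := B) n).range.index =
      n ^ finrank ℤ B * Nat.card (nsmulAddMonoidHom (α := B) n).ker := by
  rw [← relIndex_mul_index (le_sup_left (b := (Submodule.torsion ℤ B).toAddSubgroup)),
    relIndex_sup_left, relIndex_range_nsmul_torsion hn, index_range_nsmul_sup_torsion, mul_comm]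

theorem relIndex_map_nsmul_eq_pow_finrank_mul_card_inf_ker [Module.Finite ℤ B]
    (K : AddSubgroup B) {n : ℕ} (hn : n ≠ 0) :
    (K.map (nsmulAddMonoidHom n)).relIndex K =
      n ^ finrank ℤ K * Nat.card ↥(K ⊓ (nsmulAddMonoidHom (α := B) n).ker) := by
  rw [relIndex, addSubgroupOf_map_nsmulAddMonoidHom_eq_range,
    index_range_nsmul_eq_pow_finrank_mul_card_ker hn, ker_nsmul_eq_addSubgroupOf,
    ← inf_addSubgroupOf_left]
  exact congrArg _ (Nat.card_congr (addSubgroupOfEquivOfLe inf_le_left).toEquiv)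

theorem card_inf_ker_nsmul_ne_zero [Module.Finite ℤ B] (K : AddSubgroup B) {n : ℕ}
    (hn : n ≠ 0) : Nat.card ↥(K ⊓ (nsmulAddMonoidHom (α := B) n).ker) ≠ 0 := by
  have : Finite (Submodule.torsion ℤ B).toAddSubgroup :=
    Module.finite_of_fg_torsion (Submodule.torsion ℤ B) Submodule.torsion_isTorsion
  have hle : K ⊓ (nsmulAddMonoidHom (α := B) n).ker ≤ (Submodule.torsion ℤ B).toAddSubgroup :=
    inf_le_right.trans (ker_nsmul_le_torsion hn)
  exact Nat.card_ne_zero.mpr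
    ⟨inferInstance, Finite.of_injective (inclusion hle) (inclusion_injective hle)⟩

/-- `n K = g K ≤ g B ≤ K`, and `(g B : g K) = (B : K + ker g)`. -/
theorem index_sup_ker_mul_relIndex_range [Module.Finite ℤ B] {n : ℕ} (hn : n ≠ 0) (g : B →+ B)
    {K : AddSubgroup B} (hgK : g.range ≤ K) (hg : ∀ b ∈ K, g b = n • b) :
    (K ⊔ g.ker).index * g.range.relIndex K =
      n ^ finrank ℤ K * Nat.card ↥(K ⊓ (nsmulAddMonoidHom (α := B) n).ker) := by
  have hmap : K.map g = K.map (nsmulAddMonoidHom n) := by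
    ext b
    simp only [mem_map, nsmulAddMonoidHom_apply]
    exact ⟨fun ⟨a, ha, hab⟩ => ⟨a, ha, (hg a ha).symm.trans hab⟩,
      fun ⟨a, ha, hab⟩ => ⟨a, ha, (hg a ha).trans hab⟩⟩
  have hsup : (K ⊔ g.ker).index = (K.map g).relIndex g.range := by
    rw [AddMonoidHom.range_eq_map, relIndex_map_map, top_sup_eq, relIndex_top_right]
  rw [hsup, relIndex_mul_relIndex _ _ _ (map_le_range g K) hgK, hmap,
    relIndex_map_nsmul_eq_pow_finrank_mul_card_inf_ker K hn]

end AddSubgroup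

section OrderTwo

variable {G : Type*} [Group G] {A : Type*} [AddCommGroup A] [DistribMulAction G A] {σ : G}

theorem eq_one_or_eq_of_card_eq_two (hG : Nat.card G = 2) (hσ : σ ≠ 1) (τ : G) :
    τ = 1 ∨ τ = σ := by
  obtain ⟨_, _, huniq⟩ := (Nat.card_eq_two_iff' (1 : G)).mp hG
  exact or_iff_not_imp_left.mpr fun hτ => (huniq τ hτ).trans (huniq σ hσ).symm

theorem smul_smul_self_of_card_eq_two (hG : Nat.card G = 2) (a : A) : σ • σ • a = a := by
  rw [smul_smul, ← sq, ← hG, pow_card_eq_one', one_smul]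

theorem oneSubMap_apply (a : A) : oneSubMap G A σ a = a - σ • a := rfl

theorem fixedSub_eq_ker_oneSubMap (hG : Nat.card G = 2) (hσ : σ ≠ 1) :
    fixedSub G A = (oneSubMap G A σ).ker := by
  ext a
  rw [AddMonoidHom.mem_ker, oneSubMap_apply, sub_eq_zero]
  refine ⟨fun h => (h σ).symm, fun h τ => ?_⟩
  rcases eq_one_or_eq_of_card_eq_two hG hσ τ with rfl | rfl
  · exact one_smul G a
  · exact h.symm

variable [Fintype G]

theorem normMap_apply_of_card_eq_two (hG : Nat.card G = 2) (hσ : σ ≠ 1) (a : A) :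
    normMap G A a = a + σ • a := by
  classical
  have huniv : (Finset.univ : Finset G) = {1, σ} := by
    ext τ
    simpa using eq_one_or_eq_of_card_eq_two hG hσ τ
  simp [normMap, huniv, Finset.sum_pair hσ.symm]

variable (hG : Nat.card G = 2) (hσ : σ ≠ 1)
include hG hσ

theorem oneSubMap_apply_of_mem_ker_normMap {a : A} (ha : a ∈ (normMap G A).ker) :
    oneSubMap G A σ a = 2 • a := by
  rw [AddMonoidHom.mem_ker, normMap_apply_of_card_eq_two hG hσ] at ha
  rw [oneSubMap_apply, eq_neg_of_add_eq_zero_right ha, sub_neg_eq_add, two_nsmul]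

theorem normMap_apply_of_mem_ker_oneSubMap {a : A} (ha : a ∈ (oneSubMap G A σ).ker) :
    normMap G A a = 2 • a := by
  rw [AddMonoidHom.mem_ker, oneSubMap_apply, sub_eq_zero] at ha
  rw [normMap_apply_of_card_eq_two hG hσ, ← ha, two_nsmul]

theorem range_oneSubMap_le_ker_normMap : (oneSubMap G A σ).range ≤ (normMap G A).ker := by
  rintro _ ⟨a, rfl⟩
  rw [AddMonoidHom.mem_ker, normMap_apply_of_card_eq_two hG hσ, oneSubMap_apply, smul_sub,
    smul_smul_self_of_card_eq_two hG]
  abel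

theorem range_normMap_le_ker_oneSubMap : (normMap G A).range ≤ (oneSubMap G A σ).ker := by
  rintro _ ⟨a, rfl⟩
  rw [AddMonoidHom.mem_ker, normMap_apply_of_card_eq_two hG hσ, oneSubMap_apply, smul_add,
    smul_smul_self_of_card_eq_two hG]
  abel

theorem ker_normMap_inf_ker_two_nsmul :
    (normMap G A).ker ⊓ (nsmulAddMonoidHom (α := A) 2).ker =
      (oneSubMap G A σ).ker ⊓ (nsmulAddMonoidHom (α := A) 2).ker := by
  ext a
  simp only [AddSubgroup.mem_inf, AddMonoidHom.mem_ker, normMap_apply_of_card_eq_two hG hσ,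
    oneSubMap_apply, nsmulAddMonoidHom_apply, two_nsmul]
  constructor
  · rintro ⟨h, h2⟩
    exact ⟨by rw [show a - σ • a = (a + a) - (a + σ • a) by abel, h, h2, sub_zero], h2⟩
  · rintro ⟨h, h2⟩
    exact ⟨by rw [show a + σ • a = (a + a) - (a - σ • a) by abel, h, h2, sub_zero], h2⟩

theorem H0card_eq_relIndex :
    H0card G A = (normMap G A).range.relIndex (oneSubMap G A σ).ker := by
  rw [← fixedSub_eq_ker_oneSubMap hG hσ]
  rfl

theorem finrank_ker_normMap_add_finrank_ker_oneSubMap [Module.Finite ℤ A] :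
    finrank ℤ (normMap G A).ker + finrank ℤ (oneSubMap G A σ).ker = finrank ℤ A := by
  set KD := (oneSubMap G A σ).ker
  have h2KD : KD.map (nsmulAddMonoidHom 2) ≤ (normMap G A).range := by
    rintro _ ⟨a, ha, rfl⟩
    exact ⟨a, normMap_apply_of_mem_ker_oneSubMap hG hσ ha⟩
  have hfin : (normMap G A).range.relIndex KD ≠ 0 := by
    refine right_ne_zero_of_mul (a := (KD.map (nsmulAddMonoidHom 2)).relIndex (normMap G A).range) ?_
    rw [AddSubgroup.relIndex_mul_relIndex _ _ _ h2KD (range_normMap_le_ker_oneSubMap hG hσ),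
      AddSubgroup.relIndex_map_nsmul_eq_pow_finrank_mul_card_inf_ker KD two_ne_zero]
    exact mul_ne_zero (pow_ne_zero _ two_ne_zero) (KD.card_inf_ker_nsmul_ne_zero two_ne_zero)
  rw [← AddSubgroup.finrank_eq_of_relIndex_ne_zero (range_normMap_le_ker_oneSubMap hG hσ) hfin,
    add_comm]
  exact (normMap G A).finrank_range_add_finrank_ker

end OrderTwo

/-- For `G = {1, σ}` of order 2 and `A` a finitely generated `G`-module,
`#H¹(G,A) = 2^{r(A) - 2r₊(A)} · (A^G : N A)`. -/
theorem h1_card_eq_two_zpow_rank_sub_two_mul_rank_plus_mul_index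
    (hG : Nat.card G = 2) (σ : G) (hσ : σ ≠ 1) [AddGroup.FG A] :
    (H1card G A σ : ℚ) =
      (2 : ℚ) ^ ((Module.finrank ℤ A : ℤ) - 2 * (Module.finrank ℤ (fixedSub G A) : ℤ)) *
        (H0card G A : ℚ) := by
  have : Module.Finite ℤ A := Module.Finite.iff_addGroup_fg.mpr ‹_›
  rw [fixedSub_eq_ker_oneSubMap hG hσ, ← finrank_ker_normMap_add_finrank_ker_oneSubMap hG hσ]
  set KN := (normMap G A).ker
  set KD := (oneSubMap G A σ).ker
  set c := Nat.card ↥(KN ⊓ (nsmulAddMonoidHom (α := A) 2).ker)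
  have hH1 : (KN ⊔ KD).index * H1card G A σ = 2 ^ finrank ℤ KN * c :=
    AddSubgroup.index_sup_ker_mul_relIndex_range two_ne_zero _
      (range_oneSubMap_le_ker_normMap hG hσ) fun _ => oneSubMap_apply_of_mem_ker_normMap hG hσ
  have hH0 : (KN ⊔ KD).index * H0card G A = 2 ^ finrank ℤ KD * c := by
    have h := AddSubgroup.index_sup_ker_mul_relIndex_range two_ne_zero _
      (range_normMap_le_ker_oneSubMap (A := A) hG hσ) fun _ =>
        normMap_apply_of_mem_ker_oneSubMap hG hσ
    rwa [sup_comm, ← H0card_eq_relIndex hG hσ, ← ker_normMap_inf_ker_two_nsmul hG hσ] at h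
  have hc : c ≠ 0 := KN.card_inf_ker_nsmul_ne_zero two_ne_zero
  have hx : ((KN ⊔ KD).index : ℚ) ≠ 0 := by
    exact_mod_cast left_ne_zero_of_mul (hH1 ▸ mul_ne_zero (pow_ne_zero _ two_ne_zero) hc)
  rw [Nat.cast_add, two_mul, add_sub_add_right_eq_sub, zpow_sub₀ two_ne_zero, zpow_natCast,
    zpow_natCast]
  apply mul_left_cancel₀ hx
  rw [mul_left_comm, ← Nat.cast_mul, ← Nat.cast_mul, hH1, hH0]
  push_cast
  field_simp
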